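/- arXiv:1606.02196 — 2 statements merged into one kernel-verified Lean document; each statement's English description precedes it below -/
import Mathlib

section
/- Define the energy E(x,y) = (α_l x + y)²/2 + (α_l γ_l + η) x²/2 + K|x|^q/q. Then along every C¹ solution (x(t),y(t)) of system (S_l), one has (d/dt) E(x(t),y(t)) = (α_l + γ_l)(α_l x(t) + y(t))². -/
open Real Filter Topology Set

noncomputable section

/-- The energy function E(x,y) = (α x + y)²/2 + (αγ + η) x²/2 + K|x|^q/q. -/
def energy (η K q α γ : ℝ) (x y : ℝ) : ℝ :=
  (α * x + y) ^ 2 / 2 + (α * γ + η) * x ^ 2 / 2 + K * |x| ^ q / q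

theorem HasDerivAt.energy {η K q α γ x' y' t : ℝ} {x y : ℝ → ℝ} (hq : 1 < q)
    (hx : HasDerivAt x x' t) (hy : HasDerivAt y y' t) :
    HasDerivAt (fun s => energy η K q α γ (x s) (y s))
      ((α * x t + y t) * (α * x' + y') + (α * γ + η) * x t * x'
        + K * |x t| ^ (q - 2) * x t * x') t := by
  have hsq : HasDerivAt (fun s => (α * x s + y s) ^ 2 / 2)
      (2 * (α * x t + y t) * (α * x' + y') / 2) t := by
    simpa using (((hx.const_mul α).add hy).pow 2).div_const 2
  have hx2 : HasDerivAt (fun s => (α * γ + η) * x s ^ 2 / 2)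
      ((α * γ + η) * (2 * x t * x') / 2) t := by
    simpa using ((hx.pow 2).const_mul (α * γ + η)).div_const 2
  have habs : HasDerivAt (fun s => K * |x s| ^ q / q)
      (K * (q * |x t| ^ (q - 2) * x t * x') / q) t :=
    (((hasDerivAt_abs_rpow (x t) hq).comp t hx).const_mul K).div_const q
  refine ((hsq.add hx2).add habs).congr_deriv ?_
  field_simp [(by linarith : q ≠ 0)]

-- `K |x|^q / q` is a potential for the nonlinearity `K x |x|^(q-2)`, so the latter cancels.
theorem energy_deriv_along_system (η K q α γ x y : ℝ) :
    (α * x + y) * (α * (α * x + y) + (-η * x + γ * y - K * x * |x| ^ (q - 2)))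
      + (α * γ + η) * x * (α * x + y) + K * |x| ^ (q - 2) * x * (α * x + y) =
      (α + γ) * (α * x + y) ^ 2 := by
  ring

theorem stmt8_general (η K q α γ : ℝ)
    (hq : 2 < q)
    (x y : ℝ → ℝ)
    (hx : ContDiff ℝ 1 x) (hy : ContDiff ℝ 1 y)
    (hsys : ∀ t : ℝ,
      deriv x t = α * x t + y t ∧
      deriv y t = -η * x t + γ * y t - K * x t * |x t| ^ (q - 2)) :
    ∀ t : ℝ,
      deriv (fun s => energy η K q α γ (x s) (y s)) t =
        (α + γ) * (α * x t + y t) ^ 2 := by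
  intro t
  have hxd : HasDerivAt x (α * x t + y t) t :=
    (hsys t).1 ▸ (hx.differentiable one_ne_zero t).hasDerivAt
  have hyd : HasDerivAt y (-η * x t + γ * y t - K * x t * |x t| ^ (q - 2)) t :=
    (hsys t).2 ▸ (hy.differentiable one_ne_zero t).hasDerivAt
  rw [(hxd.energy (by linarith) hyd).deriv]
  exact energy_deriv_along_system η K q α γ (x t) (y t)

theorem stmt8 (n : ℕ) (hn : 2 < n) (η K q l α γ : ℝ)
    (hq : 2 < q) (hl : 2 < l)
    (hα : α = 2 / (l - 2)) (hγ : γ = α + 2 - (n:ℝ))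
    (x y : ℝ → ℝ)
    (hx : ContDiff ℝ 1 x) (hy : ContDiff ℝ 1 y)
    (hsys : ∀ t : ℝ,
      deriv x t = α * x t + y t ∧
      deriv y t = -η * x t + γ * y t - K * x t * |x t| ^ (q - 2)) :
    ∀ t : ℝ,
      deriv (fun s => energy η K q α γ (x s) (y s)) t =
        (α + γ) * (α * x t + y t) ^ 2 :=
  stmt8_general η K q α γ hq x y hx hy hsys
end
end

section
/- Assume l = 2* = 2n/(n-2), so that α_l + γ_l = 0. Then E(x,y) = (α_l x + y)²/2 + (α_l γ_l + η) x²/2 + K|x|^q/q is a first integral of system (S_l): E(x(t),y(t)) is constant along every solution. Moreover, if η < (n-2)²/4 and K > 0, then the equation u'' + ((n-1)/r)u' + (η/r²)u + K r^{δ} u|u|^{q-2} = 0 (with δ > -2, q > 2 such that 2(q+δ)/(2+δ) = 2*) admits a positive C² solution u on (0,∞) such that lim_{r→0} u(r) r^{κ(η)} = d for some d ∈ (0,∞) and lim_{r→∞} u(r) r^{n-2-κ(η)} = L for some L ∈ (0,∞). -/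
/-!
With `l = 2*` one has `α = (n-2)/2 = -γ`, and then `E` is conserved: its derivative along (S_l)
is `(αx + y) (α(αx + y) + ẏ + (αγ + η) x + K x|x|^{q-2})`, and the second factor vanishes
identically once `γ = -α`.

The positive solution is the explicit profile `u(r) = A r^{-κ} (1 + r^σ)^{-m}` with
`m = 2/(q-2)` and `σ = (q-2)√((n-2)² - 4η)/2`, so that `mσ` is the gap between the two roots
`κ` and `n-2-κ` of the indicial equation `t² - (n-2)t + η = 0`. Its logarithmic derivative is
`u'/u = -(κ + mσ ρ)/r` with `ρ = r^σ/(1 + r^σ)`; plugging this in, the linear part of the equation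
leaves `-mσ²(1+m) ρ(1-ρ) u/r²`, while the critical relation `δ + 2 = σ + κ(q-2)` turns the
nonlinear term into `K A^{q-2} ρ(1-ρ) u/r²`, and `A` is chosen to make the two cancel.
The asymptotics `u ~ A r^{-κ}` at `0` and `u ~ A r^{-(κ+mσ)}` at `∞` can be read off.
-/

open Real Filter Topology Set

noncomputable section

/-- κ(η) = ((n-2) - √((n-2)²-4η))/2. -/
def kappa (n : ℕ) (η : ℝ) : ℝ :=
  (((n:ℝ) - 2) - Real.sqrt (((n:ℝ) - 2) ^ 2 - 4 * η)) / 2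

theorem hasDerivAt_energy_comp {η K q α γ : ℝ} (hq : 1 < q) {x y : ℝ → ℝ} {x' y' t : ℝ}
    (hx : HasDerivAt x x' t) (hy : HasDerivAt y y' t) :
    HasDerivAt (fun t => energy η K q α γ (x t) (y t))
      ((α * x t + y t) * (α * x' + y') + (α * γ + η) * x t * x' +
        K * |x t| ^ (q - 2) * x t * x') t := by
  have hq0 : q ≠ 0 := by positivity
  have habs := (hasDerivAt_abs_rpow (x t) hq).comp t hx
  refine (((((hx.const_mul α).add hy).pow 2).div_const 2).add
    (((hx.pow 2).const_mul (α * γ + η)).div_const 2) |>.add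
      ((habs.const_mul K).div_const q)).congr_deriv ?_
  simp only [Pi.add_apply]
  field_simp
  ring

theorem energy_eq_of_deriv_eq {η K q α γ : ℝ} (hαγ : α + γ = 0) (hq : 1 < q) {x y : ℝ → ℝ}
    (hx : Differentiable ℝ x) (hy : Differentiable ℝ y)
    (hsys : ∀ t, deriv x t = α * x t + y t ∧
      deriv y t = -η * x t + γ * y t - K * x t * |x t| ^ (q - 2))
    (s t : ℝ) : energy η K q α γ (x s) (y s) = energy η K q α γ (x t) (y t) := by
  have hE : ∀ t, HasDerivAt (fun t => energy η K q α γ (x t) (y t)) 0 t := by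
    intro t
    convert hasDerivAt_energy_comp hq (hx t).hasDerivAt (hy t).hasDerivAt using 1
    rw [(hsys t).1, (hsys t).2, show γ = -α by linarith]
    ring
  exact is_const_of_deriv_eq_zero (fun t => (hE t).differentiableAt) (fun t => (hE t).deriv) s t

def bubble (A κ σ m r : ℝ) : ℝ := A * r ^ (-κ) * (1 + r ^ σ) ^ (-m)

def bubbleLogDeriv (κ σ m r : ℝ) : ℝ := -(κ + m * σ * r ^ σ / (1 + r ^ σ)) / r

section Bubble

variable {A κ σ m r : ℝ}

theorem bubble_pos (hA : 0 < A) (hr : 0 < r) : 0 < bubble A κ σ m r := by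
  unfold bubble
  positivity

theorem contDiffOn_bubble {k : WithTop ℕ∞} : ContDiffOn ℝ k (bubble A κ σ m) (Ioi 0) := by
  intro r (hr : 0 < r)
  have h1 : 0 < 1 + r ^ σ := by positivity
  exact ((contDiffAt_const.mul (contDiffAt_rpow_const_of_ne hr.ne')).mul
    ((contDiffAt_rpow_const_of_ne h1.ne').comp r
      (contDiffAt_const.add (contDiffAt_rpow_const_of_ne hr.ne')))).contDiffWithinAt

theorem hasDerivAt_bubble (hr : 0 < r) :
    HasDerivAt (bubble A κ σ m) (bubbleLogDeriv κ σ m r * bubble A κ σ m r) r := by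
  have h1 : 0 < 1 + r ^ σ := by positivity
  refine (((hasDerivAt_rpow_const (p := -κ) (Or.inl hr.ne')).const_mul A).mul
    ((hasDerivAt_rpow_const (p := -m) (Or.inl h1.ne')).comp r
      ((hasDerivAt_rpow_const (p := σ) (Or.inl hr.ne')).const_add 1))).congr_deriv ?_
  simp only [bubble, bubbleLogDeriv, Function.comp_apply, rpow_sub_one hr.ne', rpow_sub_one h1.ne']
  field_simp
  ring

theorem hasDerivAt_bubbleLogDeriv (hr : 0 < r) :
    HasDerivAt (bubbleLogDeriv κ σ m)
      ((κ + m * σ * r ^ σ / (1 + r ^ σ)) / r ^ 2 -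
        m * σ ^ 2 * r ^ σ / ((1 + r ^ σ) ^ 2 * r ^ 2)) r := by
  have h1 : 0 < 1 + r ^ σ := by positivity
  have hP := hasDerivAt_rpow_const (p := σ) (Or.inl hr.ne')
  refine (((((hP.const_mul (m * σ)).div (hP.const_add 1) h1.ne').const_add κ).neg).div
    (hasDerivAt_id r) hr.ne').congr_deriv ?_
  simp only [Pi.neg_apply, Pi.div_apply, id, rpow_sub_one hr.ne']
  field_simp
  ring

theorem deriv_deriv_bubble (hr : 0 < r) :
    deriv (deriv (bubble A κ σ m)) r =
      ((κ + m * σ * r ^ σ / (1 + r ^ σ)) / r ^ 2 -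
        m * σ ^ 2 * r ^ σ / ((1 + r ^ σ) ^ 2 * r ^ 2)) * bubble A κ σ m r +
      bubbleLogDeriv κ σ m r * (bubbleLogDeriv κ σ m r * bubble A κ σ m r) := by
  have h : deriv (bubble A κ σ m) =ᶠ[𝓝 r] fun r => bubbleLogDeriv κ σ m r * bubble A κ σ m r := by
    filter_upwards [Ioi_mem_nhds hr] with t ht using (hasDerivAt_bubble ht).deriv
  rw [h.deriv_eq]
  exact ((hasDerivAt_bubbleLogDeriv hr).mul (hasDerivAt_bubble hr)).deriv

theorem rpow_mul_abs_bubble_rpow {q δ : ℝ} (hA : 0 < A) (hr : 0 < r) (hm : m * (q - 2) = 2)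
    (hδ : δ = σ + κ * (q - 2) - 2) :
    r ^ δ * |bubble A κ σ m r| ^ (q - 2) = A ^ (q - 2) * r ^ σ / ((1 + r ^ σ) ^ 2 * r ^ 2) := by
  have h1 : 0 < 1 + r ^ σ := by positivity
  rw [abs_of_pos (bubble_pos hA hr), bubble, mul_rpow (by positivity) (by positivity),
    mul_rpow hA.le (by positivity), ← rpow_mul hr.le, ← rpow_mul h1.le,
    show -m * (q - 2) = -2 by linarith, hδ, rpow_sub hr, rpow_add hr, rpow_neg h1.le,
    neg_mul, rpow_neg hr.le, rpow_two, rpow_two]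
  field_simp

theorem bubble_ode {N η K q δ : ℝ} (hA : 0 < A) (hr : 0 < r) (hN : N = 2 * κ + m * σ + 2)
    (hη : η = κ * (κ + m * σ)) (hm : m * (q - 2) = 2) (hδ : δ = σ + κ * (q - 2) - 2)
    (hKA : K * A ^ (q - 2) = m * σ * (σ + m * σ)) :
    deriv (deriv (bubble A κ σ m)) r + (N - 1) / r * deriv (bubble A κ σ m) r +
      η / r ^ 2 * bubble A κ σ m r +
      K * r ^ δ * bubble A κ σ m r * |bubble A κ σ m r| ^ (q - 2) = 0 := by
  rw [deriv_deriv_bubble hr, (hasDerivAt_bubble hr).deriv,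
    show K * r ^ δ * bubble A κ σ m r * |bubble A κ σ m r| ^ (q - 2) =
      K * (r ^ δ * |bubble A κ σ m r| ^ (q - 2)) * bubble A κ σ m r by ring,
    rpow_mul_abs_bubble_rpow hA hr hm hδ, bubbleLogDeriv, hN, hη]
  field_simp
  linear_combination (bubble A κ σ m r * r ^ σ) * hKA

theorem tendsto_bubble_mul_rpow_nhdsGT_zero (hσ : 0 < σ) :
    Tendsto (fun r => bubble A κ σ m r * r ^ κ) (𝓝[>] 0) (𝓝 A) := by
  have hcont : ContinuousAt (fun r : ℝ => A * (1 + r ^ σ) ^ (-m)) 0 :=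
    continuousAt_const.mul
      ((continuousAt_const.add (continuousAt_rpow_const 0 σ (Or.inr hσ.le))).rpow_const
        (Or.inl (by simp [zero_rpow hσ.ne'])))
  refine Tendsto.congr' ?_
    (by simpa [zero_rpow hσ.ne'] using hcont.tendsto.mono_left nhdsWithin_le_nhds)
  filter_upwards [self_mem_nhdsWithin] with r (hr : 0 < r)
  have hκ : r ^ (-κ) * r ^ κ = 1 := by rw [← rpow_add hr, neg_add_cancel, rpow_zero]
  rw [bubble]
  linear_combination (-(A * (1 + r ^ σ) ^ (-m))) * hκ

theorem tendsto_bubble_mul_rpow_atTop (hσ : 0 < σ) :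
    Tendsto (fun r => bubble A κ σ m r * r ^ (κ + m * σ)) atTop (𝓝 A) := by
  have hcont : ContinuousAt (fun z : ℝ => A * (1 + z) ^ (-m)) 0 :=
    continuousAt_const.mul ((continuousAt_const.add continuousAt_id).rpow_const
      (Or.inl (by norm_num)))
  refine Tendsto.congr' ?_ (by simpa using hcont.tendsto.comp (tendsto_rpow_neg_atTop hσ))
  filter_upwards [eventually_gt_atTop 0] with r hr
  have hsplit : 1 + r ^ (-σ) = r ^ (-σ) * (1 + r ^ σ) := by
    rw [mul_add, ← rpow_add hr, neg_add_cancel, rpow_zero, mul_one, add_comm]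
  rw [Function.comp_apply, hsplit, mul_rpow (by positivity) (by positivity), ← rpow_mul hr.le,
    bubble, rpow_add hr, show -σ * -m = m * σ by ring]
  have hκ : r ^ (-κ) * r ^ κ = 1 := by rw [← rpow_add hr, neg_add_cancel, rpow_zero]
  linear_combination (-(A * r ^ (m * σ) * (1 + r ^ σ) ^ (-m))) * hκ

end Bubble

theorem exists_pos_solution_of_critical {n : ℕ} {η K q δ : ℝ}
    (hη : η < ((n:ℝ) - 2) ^ 2 / 4) (hK : 0 < K) (hq : 2 < q)
    (hδ : δ = (q - 2) * ((n:ℝ) - 2) / 2 - 2) :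
    ∃ u : ℝ → ℝ, ContDiffOn ℝ 2 u (Ioi 0) ∧ (∀ r ∈ Ioi (0:ℝ), 0 < u r) ∧
      (∀ r ∈ Ioi (0:ℝ),
        deriv (deriv u) r + ((n:ℝ) - 1) / r * deriv u r + η / r ^ 2 * u r +
          K * r ^ δ * u r * |u r| ^ (q - 2) = 0) ∧
      (∃ d ∈ Ioi (0:ℝ), Tendsto (fun r => u r * r ^ kappa n η) (𝓝[>] (0:ℝ)) (𝓝 d)) ∧
      (∃ L ∈ Ioi (0:ℝ),
        Tendsto (fun r => u r * r ^ ((n:ℝ) - 2 - kappa n η)) atTop (𝓝 L)) := by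
  set s := √(((n:ℝ) - 2) ^ 2 - 4 * η)
  have hs : 0 < s := sqrt_pos.mpr (by linarith)
  have hs2 : s ^ 2 = ((n:ℝ) - 2) ^ 2 - 4 * η := sq_sqrt (by linarith)
  set κ := kappa n η
  have hκ : (n:ℝ) - 2 = 2 * κ + s := by simp only [κ, kappa]; ring
  set m := 2 / (q - 2)
  set σ := s * (q - 2) / 2
  have hq2 : q - 2 ≠ 0 := by linarith
  have hm : m * (q - 2) = 2 := div_mul_cancel₀ _ hq2
  have hmσ : m * σ = s := by simp only [m, σ]; field_simp
  have hσ : 0 < σ := by positivity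
  set c := m * σ * (σ + m * σ) / K
  have hc : 0 < c := by positivity
  set A := c ^ (q - 2)⁻¹
  have hA : 0 < A := rpow_pos_of_pos hc _
  have hKA : K * A ^ (q - 2) = m * σ * (σ + m * σ) := by
    rw [← rpow_mul hc.le, inv_mul_cancel₀ hq2, rpow_one, mul_div_cancel₀ _ hK.ne']
  refine ⟨bubble A κ σ m, contDiffOn_bubble, fun r hr => bubble_pos hA hr,
    fun r hr => bubble_ode hA hr (by linarith) ?_ hm ?_ hKA,
    ⟨A, hA, tendsto_bubble_mul_rpow_nhdsGT_zero hσ⟩, ⟨A, hA, ?_⟩⟩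
  · rw [hmσ]; linear_combination (1 / 4) * hs2 + ((n:ℝ) - 2 + 2 * κ + s) / 4 * hκ
  · rw [hδ]; linear_combination (q - 2) / 2 * hκ
  · rw [show (n:ℝ) - 2 - κ = κ + m * σ by linarith]
    exact tendsto_bubble_mul_rpow_atTop hσ

theorem stmt9 (n : ℕ) (hn : 2 < n) (η K q δ l α γ : ℝ)
    (hq : 2 < q) (hδ : -2 < δ)
    (hl : l = 2 * (q + δ) / (2 + δ)) (hlcrit : l = 2 * (n:ℝ) / ((n:ℝ) - 2))
    (hα : α = 2 / (l - 2)) (hγ : γ = α + 2 - (n:ℝ)) :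
    -- α + γ = 0 and E is a first integral of (S_l)
    (α + γ = 0) ∧
    (∀ x y : ℝ → ℝ, ContDiff ℝ 1 x → ContDiff ℝ 1 y →
      (∀ t : ℝ,
        deriv x t = α * x t + y t ∧
        deriv y t = -η * x t + γ * y t - K * x t * |x t| ^ (q - 2)) →
      ∀ s t : ℝ, energy η K q α γ (x s) (y s) = energy η K q α γ (x t) (y t)) ∧
    -- existence of a positive solution with the two-sided asymptotics
    (η < ((n:ℝ) - 2) ^ 2 / 4 → 0 < K →
      ∃ u : ℝ → ℝ, ContDiffOn ℝ 2 u (Ioi 0) ∧ (∀ r ∈ Ioi (0:ℝ), 0 < u r) ∧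
        (∀ r ∈ Ioi (0:ℝ),
          deriv (deriv u) r + ((n:ℝ) - 1) / r * deriv u r + η / r ^ 2 * u r +
            K * r ^ δ * u r * |u r| ^ (q - 2) = 0) ∧
        (∃ d ∈ Ioi (0:ℝ),
          Tendsto (fun r => u r * r ^ kappa n η) (𝓝[>] (0:ℝ)) (𝓝 d)) ∧
        (∃ L ∈ Ioi (0:ℝ),
          Tendsto (fun r => u r * r ^ ((n:ℝ) - 2 - kappa n η)) atTop (𝓝 L))) := by
  have hn2 : (0:ℝ) < (n:ℝ) - 2 := by
    have : (2:ℝ) < n := by exact_mod_cast hn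
    linarith
  have hα' : α = ((n:ℝ) - 2) / 2 := by
    rw [hα, hlcrit]
    field_simp
    ring
  have hδ' : δ = (q - 2) * ((n:ℝ) - 2) / 2 - 2 := by
    have h := hl.symm.trans hlcrit
    rw [div_eq_div_iff (by linarith) hn2.ne'] at h
    linarith
  have hαγ : α + γ = 0 := by rw [hγ, hα']; ring
  exact ⟨hαγ, fun x y hx hy hsys => energy_eq_of_deriv_eq hαγ (by linarith)
      (hx.differentiable one_ne_zero) (hy.differentiable one_ne_zero) hsys,
    fun hη hK => exists_pos_solution_of_critical hη hK hq hδ'⟩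

end
end
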